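/- arXiv:1811.09553 — 3 statements merged into one kernel-verified Lean document; each statement's English description precedes it below -/
import Mathlib

section
/- Let A be an n×n matrix over a field k with rank(A) ≤ n − 2, and let D be a rank-1 n×n matrix. Then there exists a rank-1 matrix C commuting with both A and D. -/
/-!
The matrix `C = u vᵀ` commutes with `A` as soon as `A u = 0` and `vᵀ A = 0`, since then
`A C = (A u) vᵀ = 0 = u (vᵀ A) = C A`. If `A ≠ 0`, then `n ≥ 3` and `rank A + rank D ≤ n - 1`,
so `ker A ∩ ker D` and `ker Aᵀ ∩ ker Dᵀ` are nonzero, and nonzero `u`, `v` taken from them give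
a rank-one `C` commuting with both. If `A = 0`, take `C = D`.
-/

open Matrix Module

theorem LinearMap.exists_ne_zero_map_eq_zero_of_finrank_range_add_lt {K V W₁ W₂ : Type*}
    [DivisionRing K] [AddCommGroup V] [Module K V] [FiniteDimensional K V]
    [AddCommGroup W₁] [Module K W₁] [AddCommGroup W₂] [Module K W₂]
    (f : V →ₗ[K] W₁) (g : V →ₗ[K] W₂)
    (h : finrank K (range f) + finrank K (range g) < finrank K V) :
    ∃ v ≠ 0, f v = 0 ∧ g v = 0 := by
  have hf := f.finrank_range_add_finrank_ker
  have hg := g.finrank_range_add_finrank_ker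
  have hker : ¬ Disjoint (ker f) (ker g) := fun hd => by
    have := Submodule.finrank_add_finrank_le_of_disjoint hd
    omega
  simp only [Submodule.disjoint_def, mem_ker, not_forall] at hker
  obtain ⟨v, hfv, hgv, hv⟩ := hker
  exact ⟨v, hv, hfv, hgv⟩

namespace Matrix

variable {K m n p : Type*} [Field K] [Fintype n]

theorem exists_ne_zero_mulVec_eq_zero_of_rank_add_lt (A : Matrix m n K) (B : Matrix p n K)
    (h : A.rank + B.rank < Fintype.card n) :
    ∃ v ≠ 0, A *ᵥ v = 0 ∧ B *ᵥ v = 0 :=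
  LinearMap.exists_ne_zero_map_eq_zero_of_finrank_range_add_lt A.mulVecLin B.mulVecLin
    (by simpa [Matrix.rank] using h)

theorem exists_ne_zero_vecMul_eq_zero_of_rank_add_lt [Fintype m] [Fintype p] (A : Matrix m n K)
    (B : Matrix m p K) (h : A.rank + B.rank < Fintype.card m) :
    ∃ v ≠ 0, v ᵥ* A = 0 ∧ v ᵥ* B = 0 := by
  simpa only [mulVec_transpose] using
    exists_ne_zero_mulVec_eq_zero_of_rank_add_lt Aᵀ Bᵀ (by rwa [rank_transpose, rank_transpose])

theorem rank_eq_zero_iff [DecidableEq n] {A : Matrix m n K} : A.rank = 0 ↔ A = 0 := by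
  refine ⟨fun h => ?_, fun h => h ▸ rank_zero⟩
  rw [rank, Submodule.finrank_eq_zero, LinearMap.range_eq_bot] at h
  exact toLin'.map_eq_zero_iff.mp h

theorem rank_vecMulVec_eq_one {u v : n → K} (hu : u ≠ 0) (hv : v ≠ 0) :
    (vecMulVec u v).rank = 1 := by
  classical
  have hne : (vecMulVec u v).rank ≠ 0 := by
    rw [Ne, rank_eq_zero_iff]
    exact vecMulVec_ne_zero hu hv
  have := rank_vecMulVec_le u v
  omega

theorem commute_vecMulVec {A : Matrix n n K} {u v : n → K} (hu : A *ᵥ u = 0)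
    (hv : v ᵥ* A = 0) : Commute A (vecMulVec u v) := by
  rw [Commute, SemiconjBy, mul_vecMulVec, vecMulVec_mul, hu, hv, zero_vecMulVec, vecMulVec_zero]

end Matrix

theorem stmt_6 (k : Type*) [Field k] (n : ℕ)
    (A D : Matrix (Fin n) (Fin n) k)
    (hA : A.rank ≤ n - 2) (hD : D.rank = 1) :
    ∃ C : Matrix (Fin n) (Fin n) k,
      C.rank = 1 ∧ A * C = C * A ∧ D * C = C * D := by
  by_cases hA0 : A = 0
  · exact ⟨D, hD, by simp [hA0], rfl⟩
  have hApos : A.rank ≠ 0 := rank_eq_zero_iff.not.mpr hA0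
  have hlt : A.rank + D.rank < Fintype.card (Fin n) := by
    rw [Fintype.card_fin]
    omega
  obtain ⟨u, hu, hAu, hDu⟩ := exists_ne_zero_mulVec_eq_zero_of_rank_add_lt A D hlt
  obtain ⟨v, hv, hvA, hvD⟩ := exists_ne_zero_vecMul_eq_zero_of_rank_add_lt A D hlt
  exact ⟨vecMulVec u v, rank_vecMulVec_eq_one hu hv, commute_vecMulVec hAu hvA,
    commute_vecMulVec hDu hvD⟩
end

section
/- Let k be a field, n ≥ 3, and let A, B ∈ Matₙₓₙ(k) both be diagonalizable over k. Then there exist non-scalar matrices C, D, E over k such that AC = CA, CE = EC, ED = DE, and DB = BD (i.e. the commuting distance between A and B is at most 4). -/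
/-!
An eigenvalue `c` of `A` gives a right eigenvector `u` of `A` and, since `Aᵀ` has the same
characteristic polynomial, a left eigenvector `v`; then `A (u vᵀ) = c u vᵀ = (u vᵀ) A`. So a
diagonalizable `A` commutes with a rank-one matrix `C = u vᵀ`, and likewise `B` with `D = x yᵀ`.
When `n ≥ 3` there are nonzero `w ⟂ v, y` and `z ⟂ u, x`, and `E = w zᵀ` annihilates `C` and `D`
from both sides, so it commutes with both. Rank-one matrices are never scalar once `n ≥ 2`.
-/

open Matrix Module.End

namespace Matrix

variable {ι R K : Type*} [Fintype ι]

theorem commute_vecMulVec_of_mulVec_eq_smul_of_vecMul_eq_smul [CommSemiring R]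
    {A : Matrix ι ι R} {u v : ι → R} {c : R} (hu : A *ᵥ u = c • u) (hv : v ᵥ* A = c • v) :
    Commute A (vecMulVec u v) := by
  rw [Commute, SemiconjBy, mul_vecMulVec, vecMulVec_mul, hu, hv, smul_vecMulVec, vecMulVec_smul]

variable [Field K]

theorem exists_ne_zero_dotProduct_eq_zero (h : 2 < Fintype.card ι) (v y : ι → K) :
    ∃ w ≠ 0, v ⬝ᵥ w = 0 ∧ y ⬝ᵥ w = 0 := by
  have hker : LinearMap.ker (of ![v, y]).mulVecLin ≠ ⊥ :=
    LinearMap.ker_ne_bot_of_finrank_lt (by simpa using h)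
  obtain ⟨w, hw, hw0⟩ := (Submodule.ne_bot_iff _).mp hker
  have hw' : ![v ⬝ᵥ w, y ⬝ᵥ w] = 0 := by simpa using hw
  exact ⟨w, hw0, by simpa using congrFun hw' 0, by simpa using congrFun hw' 1⟩

theorem exists_vecMulVec_commute_vecMulVec (h : 2 < Fintype.card ι) (u v x y : ι → K) :
    ∃ w z : ι → K, w ≠ 0 ∧ z ≠ 0 ∧
      Commute (vecMulVec u v) (vecMulVec w z) ∧ Commute (vecMulVec w z) (vecMulVec x y) := by
  obtain ⟨w, hw0, hvw, hyw⟩ := exists_ne_zero_dotProduct_eq_zero h v y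
  obtain ⟨z, hz0, huz, hxz⟩ := exists_ne_zero_dotProduct_eq_zero h u x
  refine ⟨w, z, hw0, hz0, ?_, ?_⟩ <;>
    simp only [Commute, SemiconjBy, vecMulVec_mul_vecMulVec, dotProduct_comm z, hvw, hyw, huz,
      hxz, zero_smul, vecMulVec_zero]

variable [DecidableEq ι]

theorem exists_mulVec_eq_smul_of_mem_spectrum {A : Matrix ι ι K} {c : K}
    (hc : c ∈ spectrum K A) : ∃ u ≠ 0, A *ᵥ u = c • u := by
  rw [← spectrum_toLin', ← hasEigenvalue_iff_mem_spectrum] at hc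
  obtain ⟨u, hu⟩ := hc.exists_hasEigenvector
  exact ⟨u, hu.2, by simpa using hu.apply_eq_smul⟩

theorem exists_vecMul_eq_smul_of_mem_spectrum {A : Matrix ι ι K} {c : K}
    (hc : c ∈ spectrum K A) : ∃ v ≠ 0, v ᵥ* A = c • v := by
  rw [mem_spectrum_iff_isRoot_charpoly, ← charpoly_transpose,
    ← mem_spectrum_iff_isRoot_charpoly] at hc
  simpa [mulVec_transpose] using exists_mulVec_eq_smul_of_mem_spectrum hc

theorem exists_commute_vecMulVec_of_mem_spectrum {A : Matrix ι ι K} {c : K}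
    (hc : c ∈ spectrum K A) : ∃ u v : ι → K, u ≠ 0 ∧ v ≠ 0 ∧ Commute A (vecMulVec u v) := by
  obtain ⟨u, hu0, hu⟩ := exists_mulVec_eq_smul_of_mem_spectrum hc
  obtain ⟨v, hv0, hv⟩ := exists_vecMul_eq_smul_of_mem_spectrum hc
  exact ⟨u, v, hu0, hv0, commute_vecMulVec_of_mulVec_eq_smul_of_vecMul_eq_smul hu hv⟩

theorem mem_spectrum_conj_diagonal {g : Matrix ι ι K} (hg : IsUnit g) (d : ι → K) (i : ι) :
    d i ∈ spectrum K (g * diagonal d * g⁻¹) := by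
  rw [← hg.unit_spec, ← coe_units_inv, spectrum.units_conjugate, spectrum_diagonal]
  exact Set.mem_range_self i

theorem not_exists_vecMulVec_eq_smul_one [Nontrivial ι] {u v : ι → K} (hu : u ≠ 0)
    (hv : v ≠ 0) : ¬ ∃ c : K, vecMulVec u v = c • (1 : Matrix ι ι K) := by
  rintro ⟨c, hc⟩
  have hc0 : c ≠ 0 := by
    rintro rfl
    exact vecMulVec_ne_zero hu hv (by simpa using hc)
  have hone : vecMulVec (c⁻¹ • u) v = 1 := by
    rw [smul_vecMulVec, hc, smul_smul, inv_mul_cancel₀ hc0, one_smul]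
  have hrank := rank_vecMulVec_le (c⁻¹ • u) v
  rw [hone, rank_one] at hrank
  exact Fintype.one_lt_card.not_ge hrank

end Matrix

theorem stmt_13 (k : Type*) [Field k] (n : ℕ) (hn : 3 ≤ n)
    (A B : Matrix (Fin n) (Fin n) k)
    (hA : ∃ g : Matrix (Fin n) (Fin n) k, IsUnit g ∧
      ∃ d : Fin n → k, A = g * Matrix.diagonal d * g⁻¹)
    (hB : ∃ h : Matrix (Fin n) (Fin n) k, IsUnit h ∧
      ∃ e : Fin n → k, B = h * Matrix.diagonal e * h⁻¹) :
    ∃ C D E : Matrix (Fin n) (Fin n) k,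
      (¬ ∃ c : k, C = c • (1 : Matrix (Fin n) (Fin n) k)) ∧
      (¬ ∃ c : k, D = c • (1 : Matrix (Fin n) (Fin n) k)) ∧
      (¬ ∃ c : k, E = c • (1 : Matrix (Fin n) (Fin n) k)) ∧
      A * C = C * A ∧ C * E = E * C ∧ E * D = D * E ∧ D * B = B * D := by
  obtain ⟨g, hg, d, rfl⟩ := hA
  obtain ⟨h, hh, e, rfl⟩ := hB
  have : Nontrivial (Fin n) := Fin.nontrivial_iff_two_le.mpr (by omega)
  have hcard : 2 < Fintype.card (Fin n) := by rw [Fintype.card_fin]; omega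
  let i₀ : Fin n := ⟨0, by omega⟩
  obtain ⟨u, v, hu, hv, hAC⟩ :=
    exists_commute_vecMulVec_of_mem_spectrum (mem_spectrum_conj_diagonal hg d i₀)
  obtain ⟨x, y, hx, hy, hBD⟩ :=
    exists_commute_vecMulVec_of_mem_spectrum (mem_spectrum_conj_diagonal hh e i₀)
  obtain ⟨w, z, hw, hz, hCE, hED⟩ := exists_vecMulVec_commute_vecMulVec hcard u v x y
  exact ⟨vecMulVec u v, vecMulVec x y, vecMulVec w z,
    not_exists_vecMulVec_eq_smul_one hu hv, not_exists_vecMulVec_eq_smul_one hx hy,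
    not_exists_vecMulVec_eq_smul_one hw hz, hAC.eq, hCE.eq, hED.eq, hBD.eq.symm⟩
end

section
/- Let A = [[0,1,0],[-1,0,0],[0,0,0]] and B = [[0,-1,0],[1,0,1],[0,0,0]] be real 3×3 matrices. Then there exist non-scalar 3×3 matrices C, D over ℂ such that AC = CA, CD = DC, DB = BD (i.e. A↔C↔D↔B), but there exist no non-scalar real 3×3 matrices C, D with AC = CA, CD = DC, DB = BD. -/
open Complex in
theorem stmt_16
    (A : Matrix (Fin 3) (Fin 3) ℝ) (hA : A = !![0, 1, 0; -1, 0, 0; 0, 0, 0])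
    (B : Matrix (Fin 3) (Fin 3) ℝ) (hB : B = !![0, -1, 0; 1, 0, 1; 0, 0, 0]) :
    (∃ C D : Matrix (Fin 3) (Fin 3) ℂ,
      (¬ ∃ c : ℂ, C = c • (1 : Matrix (Fin 3) (Fin 3) ℂ)) ∧
      (¬ ∃ c : ℂ, D = c • (1 : Matrix (Fin 3) (Fin 3) ℂ)) ∧
      (A.map (algebraMap ℝ ℂ)) * C = C * (A.map (algebraMap ℝ ℂ)) ∧
      C * D = D * C ∧
      D * (B.map (algebraMap ℝ ℂ)) = (B.map (algebraMap ℝ ℂ)) * D) ∧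
    ¬ ∃ C D : Matrix (Fin 3) (Fin 3) ℝ,
      (¬ ∃ c : ℝ, C = c • (1 : Matrix (Fin 3) (Fin 3) ℝ)) ∧
      (¬ ∃ c : ℝ, D = c • (1 : Matrix (Fin 3) (Fin 3) ℝ)) ∧
      A * C = C * A ∧ C * D = D * C ∧ D * B = B * D := by
  subst hA hB
  constructor
  · refine ⟨!![0, 1, 0; -1, 0, 0; 0, 0, I], !![0, 1, I; -1, 0, -1; 0, 0, -I], ?_, ?_, ?_, ?_, ?_⟩
    · rintro ⟨c, hc⟩
      have := congrFun (congrFun hc 0) 1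
      simp [Matrix.vecHead, Matrix.vecTail] at this
    · rintro ⟨c, hc⟩
      have := congrFun (congrFun hc 0) 1
      simp [Matrix.vecHead, Matrix.vecTail] at this
    · ext i j
      fin_cases i <;> fin_cases j <;>
        simp [Matrix.mul_apply, Fin.sum_univ_succ, Matrix.map_apply]
    · ext i j
      fin_cases i <;> fin_cases j <;>
        simp [Matrix.mul_apply, Fin.sum_univ_succ]
    · ext i j
      fin_cases i <;> fin_cases j <;>
        simp [Matrix.mul_apply, Fin.sum_univ_succ, Matrix.map_apply]
  · rintro ⟨C, D, hC, hD, h1, h2, h3⟩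
    have e1 : ∀ i j, _ = _ := fun i j => congrFun (congrFun h1 i) j
    have e2 : ∀ i j, _ = _ := fun i j => congrFun (congrFun h2 i) j
    have e3 : ∀ i j, _ = _ := fun i j => congrFun (congrFun h3 i) j
    simp only [Matrix.mul_apply, Fin.sum_univ_succ, Fin.sum_univ_zero] at e1 e2 e3
    have hc02 : C 0 2 = 0 := by have := e1 1 2; simp [Matrix.vecHead, Matrix.vecTail] at this; linarith
    have hc12 : C 1 2 = 0 := by have := e1 0 2; simp [Matrix.vecHead, Matrix.vecTail] at this; linarith
    have hc20 : C 2 0 = 0 := by have := e1 2 1; simp [Matrix.vecHead, Matrix.vecTail] at this; linarith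
    have hc21 : C 2 1 = 0 := by have := e1 2 0; simp [Matrix.vecHead, Matrix.vecTail] at this; linarith
    have hc11 : C 1 1 = C 0 0 := by have := e1 0 1; simp [Matrix.vecHead, Matrix.vecTail] at this; linarith
    have hc10 : C 1 0 = -C 0 1 := by have := e1 0 0; simp [Matrix.vecHead, Matrix.vecTail] at this; linarith
    have hd20 : D 2 0 = 0 := by have := e3 2 1; simp [Matrix.vecHead, Matrix.vecTail] at this; linarith
    have hd21 : D 2 1 = 0 := by have := e3 2 0; simp [Matrix.vecHead, Matrix.vecTail] at this; linarith
    have hd11 : D 1 1 = D 0 0 := by have := e3 0 1; simp [Matrix.vecHead, Matrix.vecTail] at this; linarith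
    have hd10 : D 1 0 = -D 0 1 := by have := e3 0 0; simp [Matrix.vecHead, Matrix.vecTail] at this; linarith
    have hd12 : D 1 2 = -D 0 1 := by have := e3 0 2; simp [Matrix.vecHead, Matrix.vecTail] at this; linarith
    have hd22 : D 2 2 = D 0 0 - D 0 2 := by have := e3 1 2; simp [Matrix.vecHead, Matrix.vecTail] at this; linarith
    set a := C 0 0 with ha; set b := C 0 1 with hbdef; set c := C 2 2 with hcdef
    set p := D 0 0 with hp; set q := D 0 1 with hq'; set r := D 0 2 with hr'
    have E1 : a * r - b * q = r * c := by
      have := e2 0 2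
      simp [Matrix.vecHead, Matrix.vecTail, hc02, hc12, hd12, hd22] at this; linarith
    have E2 : b * r + a * q = q * c := by
      have := e2 1 2
      simp [Matrix.vecHead, Matrix.vecTail, hc02, hc10, hc11, hc12, hd12] at this; linarith
    clear e1 e2 e3 h1 h2 h3
    have hkey : (a - c) ^ 2 + b ^ 2 ≠ 0 := by
      intro h
      have hb : b = 0 := by
        have : b ^ 2 = 0 := le_antisymm (by nlinarith [sq_nonneg (a - c)]) (sq_nonneg b)
        exact (pow_eq_zero_iff two_ne_zero).mp this
      have hac : c = a := by
        have : (a - c) ^ 2 = 0 := le_antisymm (by nlinarith [sq_nonneg b]) (sq_nonneg _)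
        have := (pow_eq_zero_iff two_ne_zero).mp this
        linarith
      refine hC ⟨a, ?_⟩
      ext i j
      fin_cases i <;> fin_cases j <;>
        simp [Matrix.one_apply, hc02, hc12, hc20, hc21, hc11, hc10, ← hbdef, ← hcdef, hb, hac, ← ha]
    have hr : r = 0 := by
      have h0 : r * ((a - c) ^ 2 + b ^ 2) = 0 := by linear_combination (a - c) * E1 + b * E2
      rcases mul_eq_zero.mp h0 with h | h
      · exact h
      · exact absurd h hkey
    have hq : q = 0 := by
      have h0 : q * ((a - c) ^ 2 + b ^ 2) = 0 := by linear_combination (a - c) * E2 - b * E1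
      rcases mul_eq_zero.mp h0 with h | h
      · exact h
      · exact absurd h hkey
    refine hD ⟨p, ?_⟩
    ext i j
    fin_cases i <;> fin_cases j <;>
      simp [Matrix.one_apply, hd20, hd21, hd11, hd10, hd12, hd22, ← hp, ← hq', ← hr', hq, hr]
end
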